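/- Let (X_{i,n})_{1≤i≤n} be a triangular array of random vectors with values in ℝ^k having finite absolute s-th moments for some s > 2, and define Z_{i,n} := X_{i,n} 1_{{‖X_{i,n}‖ ≤ n}} − E[ X_{i,n} 1_{{‖X_{i,n}‖ ≤ n}} ]. Assume there exist constants A > 0 and R > 0 such that for all sufficiently large n and all t with ‖t‖₂ > R, (1/n) ∑_{i=1}^n |φ_{X_{i,n}}(t)| ≤ 1 − A/‖t‖₂^b, for some b>0. Then for all sufficiently large n and all t ∈ ℝ^k with ‖t‖₂ > R and ‖t‖₂^b ≤ A n^s / (4 ρ_s(n)), one has (1/n) ∑_{i=1}^n |φ_{Z_{i,n}}(t)| ≤ 1 − A/(2 ‖t‖₂^b). -/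

import Mathlib

/-!
Centering `Y = X 1_{‖X‖ ≤ n}` by its mean multiplies `φ_Y` by a unimodular constant, so
`|φ_Z| = |φ_Y|`. Since `Y` and `X` differ only on `{‖X‖ > n}`, `|φ_Y - φ_X| ≤ 2 P(‖X‖ > n)`,
which Markov's inequality bounds by `2 E‖X‖^s / n^s`. Averaging over `i`, the truncation costs
at most `2 ρ_s(n) / n^s`, and the constraint on `‖t‖^b` makes this at most `A / (2‖t‖^b)`.
-/

open MeasureTheory ProbabilityTheory Filter RealInnerProductSpace

variable {Ω : Type*} [MeasureSpace Ω]

/-- The characteristic function of a random vector `X : Ω → ℝ^k`. -/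
noncomputable def charFnRV {k : ℕ} (X : Ω → EuclideanSpace ℝ (Fin k))
    (t : EuclideanSpace ℝ (Fin k)) : ℂ :=
  ∫ ω, Complex.exp ((⟪t, X ω⟫ : ℝ) * Complex.I) ∂ℙ

/-- The average `ℓ`-th moment `ρ_ℓ(n)` of a triangular array. -/
noncomputable def rho {k : ℕ} (X : ℕ → ℕ → Ω → EuclideanSpace ℝ (Fin k)) (ℓ : ℝ) (n : ℕ) : ℝ :=
  (1 / (n : ℝ)) * ∑ i ∈ Finset.range n, ∫ ω, ‖X i n ω‖ ^ ℓ ∂ℙ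

/-- The truncated and centered variables
`Z_{i,n} = X_{i,n} 1_{‖X_{i,n}‖ ≤ n} - E[X_{i,n} 1_{‖X_{i,n}‖ ≤ n}]`. -/
noncomputable def truncZ {k : ℕ} (X : ℕ → ℕ → Ω → EuclideanSpace ℝ (Fin k)) (i n : ℕ)
    (ω : Ω) : EuclideanSpace ℝ (Fin k) :=
  (if ‖X i n ω‖ ≤ (n : ℝ) then X i n ω else 0) -
    ∫ ω', (if ‖X i n ω'‖ ≤ (n : ℝ) then X i n ω' else 0) ∂ℙ

lemma measureReal_lt_norm_le_integral_rpow_div {α E : Type*} [MeasurableSpace α]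
    [NormedAddCommGroup E] {μ : Measure α} [IsFiniteMeasure μ] {X : α → E} {s r : ℝ}
    (hs : 0 ≤ s) (hr : 0 < r) (hmom : Integrable (fun ω => ‖X ω‖ ^ s) μ) :
    μ.real {ω | r < ‖X ω‖} ≤ (∫ ω, ‖X ω‖ ^ s ∂μ) / r ^ s := by
  have hrs : 0 < r ^ s := Real.rpow_pos_of_pos hr s
  have hsub : {ω | r < ‖X ω‖} ⊆ {ω | r ^ s ≤ ‖X ω‖ ^ s} := fun ω hω =>
    Real.rpow_le_rpow hr.le (le_of_lt hω) hs
  have markov := mul_meas_ge_le_integral_of_nonneg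
    (Eventually.of_forall fun ω => Real.rpow_nonneg (norm_nonneg (X ω)) s) hmom (r ^ s)
  rw [le_div_iff₀ hrs, mul_comm]
  exact (mul_le_mul_of_nonneg_left (measureReal_mono hsub) hrs.le).trans markov

lemma two_mul_div_le_div_two_mul {ρ N T A : ℝ} (hρ : 0 ≤ ρ) (hN : 0 < N) (hT : 0 < T)
    (h : T ≤ A * N / (4 * ρ)) : 2 * ρ / N ≤ A / (2 * T) := by
  -- for `ρ = 0` the right side of `h` is the junk value `A * N / 0 = 0`
  have hρpos : 0 < ρ := hρ.lt_of_ne fun hρ0 => by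
    rw [← hρ0, mul_zero, div_zero] at h
    linarith
  rw [le_div_iff₀ (by positivity)] at h
  rw [div_le_div_iff₀ hN (by positivity)]
  linarith

variable {k : ℕ}

lemma norm_charFnRV_sub_const (X : Ω → EuclideanSpace ℝ (Fin k))
    (c t : EuclideanSpace ℝ (Fin k)) :
    ‖charFnRV (fun ω => X ω - c) t‖ = ‖charFnRV X t‖ := by
  have hshift : charFnRV (fun ω => X ω - c) t
      = charFnRV X t * Complex.exp ((-⟪t, c⟫ : ℝ) * Complex.I) := by
    simp only [charFnRV, ← integral_mul_const, ← Complex.exp_add, inner_sub_right]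
    congr with ω
    congr 1
    push_cast
    ring
  rw [hshift, norm_mul, Complex.norm_exp_ofReal_mul_I, mul_one]

lemma integrable_exp_inner_mul_I [IsFiniteMeasure (ℙ : Measure Ω)]
    {X : Ω → EuclideanSpace ℝ (Fin k)} (hX : Measurable X) (t : EuclideanSpace ℝ (Fin k)) :
    Integrable (fun ω => Complex.exp ((⟪t, X ω⟫ : ℝ) * Complex.I)) ℙ := by
  have hmeas : Measurable fun ω => Complex.exp ((⟪t, X ω⟫ : ℝ) * Complex.I) :=
    ((Complex.measurable_ofReal.comp (measurable_const.inner hX)).mul_const _).cexp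
  refine (integrable_const (1 : ℝ)).mono' hmeas.aestronglyMeasurable ?_
  exact Eventually.of_forall fun ω => (Complex.norm_exp_ofReal_mul_I _).le

lemma norm_charFnRV_sub_charFnRV_le [IsFiniteMeasure (ℙ : Measure Ω)]
    {X Y : Ω → EuclideanSpace ℝ (Fin k)} (hX : Measurable X) (hY : Measurable Y)
    (t : EuclideanSpace ℝ (Fin k)) :
    ‖charFnRV Y t - charFnRV X t‖ ≤ 2 * (ℙ : Measure Ω).real {ω | Y ω ≠ X ω} := by
  rw [charFnRV, charFnRV, ← integral_sub (integrable_exp_inner_mul_I hY t)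
    (integrable_exp_inner_mul_I hX t), ← setIntegral_eq_integral_of_forall_compl_eq_zero
    (s := {ω | Y ω ≠ X ω}) fun ω hω => by rw [Set.mem_ofPred_eq, not_not] at hω; rw [hω, sub_self]]
  refine norm_setIntegral_le_of_norm_le_const (measure_lt_top _ _) fun ω _ => ?_
  calc _ ≤ ‖Complex.exp ((⟪t, Y ω⟫ : ℝ) * Complex.I)‖
        + ‖Complex.exp ((⟪t, X ω⟫ : ℝ) * Complex.I)‖ := norm_sub_le _ _
    _ = 2 := by rw [Complex.norm_exp_ofReal_mul_I, Complex.norm_exp_ofReal_mul_I]; norm_num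

lemma norm_charFnRV_trunc_le [IsFiniteMeasure (ℙ : Measure Ω)]
    {X : Ω → EuclideanSpace ℝ (Fin k)} (hX : Measurable X) {s r : ℝ} (hs : 0 ≤ s) (hr : 0 < r)
    (hmom : Integrable (fun ω => ‖X ω‖ ^ s) ℙ) (t : EuclideanSpace ℝ (Fin k)) :
    ‖charFnRV (fun ω => if ‖X ω‖ ≤ r then X ω else 0) t‖
      ≤ ‖charFnRV X t‖ + 2 * (∫ ω, ‖X ω‖ ^ s) / r ^ s := by
  have hY : Measurable fun ω => if ‖X ω‖ ≤ r then X ω else 0 :=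
    Measurable.ite (measurableSet_le hX.norm measurable_const) hX measurable_const
  have hsub : {ω | (if ‖X ω‖ ≤ r then X ω else 0) ≠ X ω} ⊆ {ω | r < ‖X ω‖} := fun ω hω => by
    by_contra hle
    exact hω (if_pos (not_lt.mp hle))
  have hdiff := (norm_charFnRV_sub_charFnRV_le hX hY t).trans
    (mul_le_mul_of_nonneg_left ((measureReal_mono hsub).trans
      (measureReal_lt_norm_le_integral_rpow_div hs hr hmom)) zero_le_two)
  rw [mul_div_assoc]
  linarith [norm_sub_norm_le (charFnRV (fun ω => if ‖X ω‖ ≤ r then X ω else 0) t)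
    (charFnRV X t)]

lemma rho_nonneg (X : ℕ → ℕ → Ω → EuclideanSpace ℝ (Fin k)) (s : ℝ) (n : ℕ) :
    0 ≤ rho X s n :=
  mul_nonneg (by positivity) (Finset.sum_nonneg fun i _ =>
    integral_nonneg fun ω => Real.rpow_nonneg (norm_nonneg _) s)

lemma avg_norm_charFnRV_truncZ_le [IsFiniteMeasure (ℙ : Measure Ω)]
    {X : ℕ → ℕ → Ω → EuclideanSpace ℝ (Fin k)} (hmeas : ∀ i n, Measurable (X i n)) {s : ℝ}
    (hs : 0 ≤ s) (hmom : ∀ i n, Integrable (fun ω => ‖X i n ω‖ ^ s) ℙ) {n : ℕ} (hn : 0 < n)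
    (t : EuclideanSpace ℝ (Fin k)) :
    (1 / (n : ℝ)) * ∑ i ∈ Finset.range n, ‖charFnRV (truncZ X i n) t‖
      ≤ (1 / (n : ℝ)) * ∑ i ∈ Finset.range n, ‖charFnRV (X i n) t‖
        + 2 * rho X s n / (n : ℝ) ^ s := by
  have hterm : ∀ i ∈ Finset.range n, ‖charFnRV (truncZ X i n) t‖
      ≤ ‖charFnRV (X i n) t‖ + 2 * (∫ ω, ‖X i n ω‖ ^ s) / (n : ℝ) ^ s := fun i _ => by
    unfold truncZ
    rw [norm_charFnRV_sub_const]
    exact norm_charFnRV_trunc_le (hmeas i n) hs (Nat.cast_pos.mpr hn) (hmom i n) t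
  have hsum := Finset.sum_le_sum hterm
  rw [Finset.sum_add_distrib, ← Finset.sum_div, ← Finset.mul_sum] at hsum
  calc _ ≤ (1 / (n : ℝ)) * (∑ i ∈ Finset.range n, ‖charFnRV (X i n) t‖
        + 2 * (∑ i ∈ Finset.range n, ∫ ω, ‖X i n ω‖ ^ s) / (n : ℝ) ^ s) :=
        mul_le_mul_of_nonneg_left hsum (by positivity)
    _ = _ := by rw [rho]; ring

theorem statement17_general [IsProbabilityMeasure (ℙ : Measure Ω)] {k : ℕ}
    (X : ℕ → ℕ → Ω → EuclideanSpace ℝ (Fin k))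
    (hmeas : ∀ i n, Measurable (X i n))
    (s : ℝ) (hs : 2 < s)
    (hmom : ∀ i n, Integrable (fun ω => ‖X i n ω‖ ^ s) ℙ)
    (b : ℝ) (A R : ℝ) (hR : 0 < R)
    (hcramer : ∀ᶠ n : ℕ in atTop, ∀ t : EuclideanSpace ℝ (Fin k), R < ‖t‖ →
      (1 / (n : ℝ)) * ∑ i ∈ Finset.range n, ‖charFnRV (X i n) t‖ ≤ 1 - A / ‖t‖ ^ b) :
    ∀ᶠ n : ℕ in atTop, ∀ t : EuclideanSpace ℝ (Fin k), R < ‖t‖ →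
      ‖t‖ ^ b ≤ A * (n : ℝ) ^ s / (4 * rho X s n) →
      (1 / (n : ℝ)) * ∑ i ∈ Finset.range n, ‖charFnRV (truncZ X i n) t‖
        ≤ 1 - A / (2 * ‖t‖ ^ b) := by
  filter_upwards [hcramer, eventually_gt_atTop 0] with n hcr hn t ht htb
  have htb_pos : 0 < ‖t‖ ^ b := Real.rpow_pos_of_pos (hR.trans ht) b
  have hcost : 2 * rho X s n / (n : ℝ) ^ s ≤ A / (2 * ‖t‖ ^ b) :=
    two_mul_div_le_div_two_mul (rho_nonneg X s n)
      (Real.rpow_pos_of_pos (Nat.cast_pos.mpr hn) s) htb_pos htb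
  calc _ ≤ (1 / (n : ℝ)) * ∑ i ∈ Finset.range n, ‖charFnRV (X i n) t‖
        + 2 * rho X s n / (n : ℝ) ^ s :=
        avg_norm_charFnRV_truncZ_le hmeas (by linarith) hmom hn t
    _ ≤ 1 - A / ‖t‖ ^ b + A / (2 * ‖t‖ ^ b) := add_le_add (hcr t ht) hcost
    _ = 1 - A / (2 * ‖t‖ ^ b) := by ring

/-- If the array satisfies an asymptotic weak Cramer bound with constants `A, R, b`, then the
truncated and centered variables satisfy, for `n` large enough and `R < ‖t‖` with
`‖t‖^b ≤ A n^s / (4 ρ_s(n))`, the bound `(1/n) ∑ |φ_{Z_{i,n}}(t)| ≤ 1 - A/(2‖t‖^b)`. -/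
theorem statement17 [IsProbabilityMeasure (ℙ : Measure Ω)] {k : ℕ}
    (X : ℕ → ℕ → Ω → EuclideanSpace ℝ (Fin k))
    (hmeas : ∀ i n, Measurable (X i n))
    (s : ℝ) (hs : 2 < s)
    (hmom : ∀ i n, Integrable (fun ω => ‖X i n ω‖ ^ s) ℙ)
    (b : ℝ) (hb : 0 < b) (A R : ℝ) (hA : 0 < A) (hR : 0 < R)
    (hcramer : ∀ᶠ n : ℕ in atTop, ∀ t : EuclideanSpace ℝ (Fin k), R < ‖t‖ →
      (1 / (n : ℝ)) * ∑ i ∈ Finset.range n, ‖charFnRV (X i n) t‖ ≤ 1 - A / ‖t‖ ^ b) :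
    ∀ᶠ n : ℕ in atTop, ∀ t : EuclideanSpace ℝ (Fin k), R < ‖t‖ →
      ‖t‖ ^ b ≤ A * (n : ℝ) ^ s / (4 * rho X s n) →
      (1 / (n : ℝ)) * ∑ i ∈ Finset.range n, ‖charFnRV (truncZ X i n) t‖
        ≤ 1 - A / (2 * ‖t‖ ^ b) :=
  statement17_general X hmeas s hs hmom b A R hR hcramer
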